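/- arXiv:1409.3938 — 2 statements merged into one kernel-verified Lean document; each statement's English description precedes it below -/
import Mathlib

section
/- Let d ≥ 3 and 4/d ≤ α < 4/(d−1), and set s = (αd − 4)/(2α). Then there exist exponents (q, r, q̃, r̃) with 0 < 1/q, 1/r, 1/q̃, 1/r̃ < 1/2 such that: 1/q + 1/q̃ < 1; (d−2)/d < r/r̃ < d/(d−2); 1/q + d/r < d/2; 1/q̃ + d/r̃ < d/2; 2/q + d/r = d/2 − s; 2/q + d/r + 2/q̃ + d/r̃ = d; 1/q̃' = (α+1)/q; 1/r̃' = (α+1)/r; and moreover α/q + αd/(2r) = 1 and α/r < 1. -/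
set_option maxHeartbeats 1000000

private lemma aux_exp (D a : ℝ) (x y u v : ℝ) (hD : 3 ≤ D) (ha : 0 < a) (h4 : 4 ≤ a * D)
    (hx0 : 0 < x) (hx2 : x < 1/2) (hy0 : 0 < y) (hy2 : y < 1/2)
    (hu0 : 0 < u) (hu2 : u < 1/2) (hv0 : 0 < v) (hv2 : v < 1/2)
    (hH1 : (D-2)*y < D*v) (hH2 : (D-2)*v < D*y)
    (hF : u + D*v < D/2)
    (hline : a*(2*x + D*y) = 2)
    (hud : u = 1 - (a+1)*x) (hvd : v = 1 - (a+1)*y) :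
    ∃ q r qt rt : ℝ,
      (0 < 1 / q ∧ 1 / q < 1 / 2) ∧
      (0 < 1 / r ∧ 1 / r < 1 / 2) ∧
      (0 < 1 / qt ∧ 1 / qt < 1 / 2) ∧
      (0 < 1 / rt ∧ 1 / rt < 1 / 2) ∧
      1 / q + 1 / qt < 1 ∧
      (D - 2) / D < r / rt ∧ r / rt < D / (D - 2) ∧
      1 / q + D / r < D / 2 ∧
      1 / qt + D / rt < D / 2 ∧
      2 / q + D / r = D / 2 - (a * D - 4) / (2 * a) ∧
      2 / q + D / r + 2 / qt + D / rt = D ∧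
      1 - 1 / qt = (a + 1) / q ∧
      1 - 1 / rt = (a + 1) / r ∧
      a / q + a * D / (2 * r) = 1 ∧
      a / r < 1 := by
  have hD0 : (0:ℝ) < D := by linarith
  have hD2 : (0:ℝ) < D - 2 := by linarith
  -- derived facts
  have hE : x + D*y < D/2 := by
    have h1 : a*(x + D*y) < a*(D/2) := by nlinarith [mul_pos ha hx0]
    exact lt_of_mul_lt_mul_left h1 ha.le
  have hinv : ∀ c b : ℝ, c / (1/b) = c * b := fun c b => by rw [div_div_eq_mul_div, div_one]
  have hay : a*y < 1 := by
    nlinarith [mul_pos ha hx0, mul_nonneg (by linarith : (0:ℝ) ≤ D - 3)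
      (mul_nonneg ha.le hy0.le)]
  refine ⟨1/x, 1/y, 1/u, 1/v, ?_, ?_, ?_, ?_, ?_, ?_, ?_, ?_, ?_, ?_, ?_, ?_, ?_, ?_, ?_⟩
  · rw [one_div_one_div]; exact ⟨hx0, hx2⟩
  · rw [one_div_one_div]; exact ⟨hy0, hy2⟩
  · rw [one_div_one_div]; exact ⟨hu0, hu2⟩
  · rw [one_div_one_div]; exact ⟨hv0, hv2⟩
  · rw [one_div_one_div, one_div_one_div]; linarith
  · rw [hinv _ _, show (1/y)*v = v/y by ring, div_lt_div_iff₀ hD0 hy0]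
    linarith
  · rw [hinv _ _, show (1/y)*v = v/y by ring, div_lt_div_iff₀ hy0 hD2]
    linarith
  · rw [one_div_one_div, hinv _ _]; exact hE
  · rw [one_div_one_div, hinv _ _]; exact hF
  · rw [hinv _ _, hinv _ _]
    have h2 : 2*x + D*y = 2/a := by rw [eq_div_iff ha.ne']; linarith [hline]
    have h3 : D / 2 - (a * D - 4) / (2 * a) = 2/a := by field_simp; ring
    rw [h3]; linarith [h2]
  · rw [hinv _ _, hinv _ _, hinv _ _, hinv _ _]
    linear_combination 2*hud + D*hvd - hline
  · rw [one_div_one_div, hinv _ _]; linear_combination -hud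
  · rw [one_div_one_div, hinv _ _]; linear_combination -hvd
  · rw [hinv _ _, show (2:ℝ)*(1/y) = 2/y by ring, div_div_eq_mul_div]
    linear_combination hline/2
  · rw [hinv _ _]; exact hay

/-- Existence of admissible exponents (Lemma on algebraic exponents, case `d ≥ 3`):
for `d ≥ 3`, `4/d ≤ α < 4/(d−1)` and `s = (αd−4)/(2α)`, there are exponents
`(q, r, q̃, r̃)` with all reciprocals in `(0, 1/2)` satisfying the listed
equalities and inequalities; here conjugates satisfy `1/p + 1/p' = 1`,
so `1/q̃' = 1 − 1/q̃` etc. -/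
theorem stmt_5 (d : ℕ) (hd : 3 ≤ d) (α : ℝ)
    (hα₁ : 4 / (d : ℝ) ≤ α) (hα₂ : α < 4 / ((d : ℝ) - 1)) :
    ∃ q r qt rt : ℝ,
      (0 < 1 / q ∧ 1 / q < 1 / 2) ∧
      (0 < 1 / r ∧ 1 / r < 1 / 2) ∧
      (0 < 1 / qt ∧ 1 / qt < 1 / 2) ∧
      (0 < 1 / rt ∧ 1 / rt < 1 / 2) ∧
      1 / q + 1 / qt < 1 ∧
      ((d : ℝ) - 2) / d < r / rt ∧ r / rt < (d : ℝ) / ((d : ℝ) - 2) ∧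
      1 / q + (d : ℝ) / r < (d : ℝ) / 2 ∧
      1 / qt + (d : ℝ) / rt < (d : ℝ) / 2 ∧
      2 / q + (d : ℝ) / r = (d : ℝ) / 2 - (α * d - 4) / (2 * α) ∧
      2 / q + (d : ℝ) / r + 2 / qt + (d : ℝ) / rt = (d : ℝ) ∧
      1 - 1 / qt = (α + 1) / q ∧
      1 - 1 / rt = (α + 1) / r ∧
      α / q + α * d / (2 * r) = 1 ∧
      α / r < 1 := by
  have hD' : (3:ℝ) ≤ (d : ℝ) := by exact_mod_cast hd
  set D : ℝ := (d : ℝ) with hDdef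
  set a : ℝ := α with hadef
  have hD : 3 ≤ D := hD'
  have hD0 : (0:ℝ) < D := by linarith
  have hD1 : (0:ℝ) < D - 1 := by linarith
  have ha : 0 < a := lt_of_lt_of_le (by positivity) hα₁
  have ha1 : (0:ℝ) < a + 1 := by linarith
  have h4 : 4 ≤ a * D := by
    have := (div_le_iff₀ hD0).mp hα₁; linarith
  have h5 : a * D < a + 4 := by
    have := (lt_div_iff₀ hD1).mp hα₂; nlinarith
  rcases le_total (a^2 + a*D) (a + 4) with hb | hb
  · -- branch 1
    have haa : a ≤ 1 := by nlinarith
    have hNy : (0:ℝ) < 4 + 2*a - a^2 := by nlinarith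
    have hNv : (0:ℝ) < 2*a*D - 4 - 2*a + a^2 := by nlinarith
    have hden1 : (0:ℝ) < 4*(a+1) := by linarith
    have hden2 : (0:ℝ) < 2*a*(a+1)*D := by positivity
    have hden3 : (0:ℝ) < 2*a*D := by positivity
    refine aux_exp D a ((a+2)/(4*(a+1))) ((4+2*a-a^2)/(2*a*(a+1)*D))
      ((2-a)/4) ((2*a*D-4-2*a+a^2)/(2*a*D)) hD ha h4
      (div_pos (by linarith) hden1) ?_ (div_pos hNy hden2) ?_
      (div_pos (by linarith) (by norm_num)) ?_ (div_pos hNv hden3) ?_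
      ?_ ?_ ?_ ?_ ?_ ?_
    · rw [div_lt_div_iff₀ hden1 two_pos]; nlinarith
    · rw [div_lt_div_iff₀ hden2 two_pos]
      nlinarith [mul_le_mul_of_nonneg_right h4 (by linarith : (0:ℝ) ≤ a+1)]
    · rw [div_lt_div_iff₀ (by norm_num : (0:ℝ) < 4) two_pos]; linarith
    · rw [div_lt_div_iff₀ hden3 two_pos]; nlinarith
    · -- hH1
      have hQ : (4 + 2*a - a^2) < (a+1)*(2*a*D-4-2*a+a^2) := by
        nlinarith [mul_nonneg ha.le (by linarith : (0:ℝ) ≤ a*D - 4), pow_pos ha 3]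
      have P1 : (D-2)*(4+2*a-a^2) < D*((a+1)*(2*a*D-4-2*a+a^2)) := by
        nlinarith [mul_lt_mul_of_pos_left hQ hD0]
      rw [← mul_div_assoc, ← mul_div_assoc, div_lt_div_iff₀ hden2 hden3]
      linarith [mul_lt_mul_of_pos_right P1 hden3]
    · -- hH2
      have P2a : a*((D-2)*((a+1)*(2*a*D-4-2*a+a^2))) < a*(D*(4+2*a-a^2)) := by
        have T5 : (0:ℝ) < a + 4 - a*D := by nlinarith
        have T1 : (0:ℝ) ≤ (a + 4 - a*D) - a^2 := by nlinarith
        have T2 : (0:ℝ) ≤ a*((a + 4 - a*D) - a^2) := mul_nonneg ha.le T1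
        have T3 : (0:ℝ) ≤ a*(a + 4 - a*D)*(a*D-4) :=
          mul_nonneg (mul_nonneg ha.le T5.le) (by linarith)
        have T4 : (0:ℝ) ≤ (a + 4 - a*D)*(a*D-4) := mul_nonneg T5.le (by linarith)
        have T6 : (0:ℝ) ≤ a*(a + 4 - a*D)*(1-a) :=
          mul_nonneg (mul_nonneg ha.le T5.le) (by linarith)
        have T7 : (0:ℝ) < a^4 := pow_pos ha 4
        have T8 : (0:ℝ) ≤ a^3*(a + 4 - a*D) := mul_nonneg (pow_pos ha 3).le T5.le
        nlinarith [T1, T2, T3, T4, T5, T6, T7, T8]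
      have P2 : (D-2)*((a+1)*(2*a*D-4-2*a+a^2)) < D*(4+2*a-a^2) :=
        lt_of_mul_lt_mul_left P2a ha.le
      rw [← mul_div_assoc, ← mul_div_assoc, div_lt_div_iff₀ hden3 hden2]
      linarith [mul_lt_mul_of_pos_right P2 hden3]
    · -- hF
      rw [← mul_div_assoc, div_add_div _ _ (by norm_num : (4:ℝ) ≠ 0) hden3.ne',
        div_lt_div_iff₀ (by positivity) two_pos]
      nlinarith [mul_pos ha hD0]
    · field_simp; ring
    · field_simp; ring
    · field_simp; ring
  · -- branch 2
    have hx0 : (0:ℝ) < 3*a + 4 - a*D := by linarith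
    have hu0 : (0:ℝ) < a*D + a - 4 := by linarith
    have hden1 : (0:ℝ) < 4*a*(a+1) := by positivity
    have hden2 : (0:ℝ) < 2*(a+1)*D := by positivity
    have hden3 : (0:ℝ) < 4*a := by positivity
    have hden4 : (0:ℝ) < 2*D := by positivity
    refine aux_exp D a ((3*a+4-a*D)/(4*a*(a+1))) ((D+1)/(2*(a+1)*D))
      ((a*D+a-4)/(4*a)) ((D-1)/(2*D)) hD ha h4
      (div_pos hx0 hden1) ?_ (div_pos (by linarith) hden2) ?_
      (div_pos hu0 hden3) ?_ (div_pos (by linarith) hden4) ?_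
      ?_ ?_ ?_ ?_ ?_ ?_
    · rw [div_lt_div_iff₀ hden1 two_pos]; nlinarith
    · rw [div_lt_div_iff₀ hden2 two_pos]; nlinarith
    · rw [div_lt_div_iff₀ hden3 two_pos]; nlinarith
    · rw [div_lt_div_iff₀ hden4 two_pos]; nlinarith
    · -- hH1
      have P1 : (D-2)*(D+1) < D*((D-1)*(a+1)) := by
        nlinarith [mul_nonneg ha.le (mul_pos hD0 hD1).le]
      rw [← mul_div_assoc, ← mul_div_assoc, div_lt_div_iff₀ hden2 hden4]
      linarith [mul_lt_mul_of_pos_right P1 hden4]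
    · -- hH2
      have P2 : (D-2)*((D-1)*(a+1)) < D*(D+1) := by
        nlinarith [mul_lt_mul_of_pos_right h5 (by linarith : (0:ℝ) < D - 2)]
      rw [← mul_div_assoc, ← mul_div_assoc, div_lt_div_iff₀ hden4 hden2]
      linarith [mul_lt_mul_of_pos_right P2 hden4]
    · -- hF
      rw [← mul_div_assoc, div_add_div _ _ hden3.ne' hden4.ne',
        div_lt_div_iff₀ (by positivity) two_pos]
      nlinarith [mul_pos ha hD0, mul_pos (mul_pos ha hD0) hD0]
    · field_simp; ring
    · field_simp; ring
    · field_simp; ring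
end

section
/- Let d ∈ {1, 2} and 4/d ≤ α < 4/(d−1), that is, α ≥ 4 for d = 1 and 2 ≤ α < 4 for d = 2. Set s = (αd − 4)/(2α). Then there exist (q, r, q̃, r̃) with 0 < 1/q, 1/r, 1/q̃, 1/r̃ < 1/2 satisfying: 1/q + d/r < d/2; 1/q̃ + d/r̃ < d/2; 2/q + d/r = d/2 − s; 2/q + d/r + 2/q̃ + d/r̃ = d; 1/q̃' = (α+1)/q; 1/r̃' = (α+1)/r; α/q + αd/(2r) = 1; and α/r < 1. Equivalently, one can choose any r with max{α+1, α(α+1)d/(α+2)} < r < α(α+1)d/(αd−2), and then q, q̃, r̃ are determined. -/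
set_option maxHeartbeats 1000000 in
lemma aux_stmt6 (d : ℝ) (hd1 : 1 ≤ d) (hd2 : d ≤ 2) (α : ℝ) (hα : 2 ≤ α)
    (hαd : 4 ≤ α * d) (hαd4 : α * d < α + 4) (r : ℝ)
    (hr1 : α + 1 < r) (hr2 : α * (α + 1) * d / (α + 2) < r)
    (hr3 : r < α * (α + 1) * d / (α * d - 2)) :
    ∃ q qt rt : ℝ,
      (0 < 1 / q ∧ 1 / q < 1 / 2) ∧
      (0 < 1 / r ∧ 1 / r < 1 / 2) ∧
      (0 < 1 / qt ∧ 1 / qt < 1 / 2) ∧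
      (0 < 1 / rt ∧ 1 / rt < 1 / 2) ∧
      1 / q + d / r < d / 2 ∧
      1 / qt + d / rt < d / 2 ∧
      2 / q + d / r = d / 2 - (α * d - 4) / (2 * α) ∧
      2 / q + d / r + 2 / qt + d / rt = d ∧
      1 - 1 / qt = (α + 1) / q ∧
      1 - 1 / rt = (α + 1) / r ∧
      α / q + α * d / (2 * r) = 1 ∧
      α / r < 1 := by
  have hα0 : (0:ℝ) < α := by linarith
  have hr0 : (0:ℝ) < r := by linarith
  have hαd2 : (0:ℝ) < α * d - 2 := by linarith
  have hα2 : (0:ℝ) < α + 2 := by linarith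
  have hr2' : α * (α + 1) * d < r * (α + 2) := by
    rwa [div_lt_iff₀ hα2] at hr2
  have hr3' : r * (α * d - 2) < α * (α + 1) * d := by
    rwa [lt_div_iff₀ hαd2] at hr3
  have h2r : α * d < 2 * r := by nlinarith
  have hfrac : 1 / α - d / (2 * r) = (2 * r - α * d) / (2 * α * r) := by
    rw [div_sub_div _ _ (ne_of_gt hα0) (by positivity : (2*r) ≠ 0),
      div_eq_div_iff (by positivity) (by positivity)]
    ring
  have hQ : (0:ℝ) < 1 / α - d / (2 * r) := by
    rw [hfrac]
    apply div_pos (by linarith) (by positivity)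
  have hQt : (0:ℝ) < 1 - (α + 1) * (1 / α - d / (2 * r)) := by
    rw [show 1 - (α + 1) * (1 / α - d / (2 * r)) = (α * d * (α + 1) - 2 * r) / (2 * α * r) by
      field_simp; ring]
    apply div_pos (by nlinarith) (by positivity)
  have hRt : (0:ℝ) < 1 - (α + 1) / r := by
    rw [show 1 - (α + 1) / r = (r - (α + 1)) / r by field_simp]
    apply div_pos (by linarith) hr0
  refine ⟨(1 / α - d / (2 * r))⁻¹, (1 - (α + 1) * (1 / α - d / (2 * r)))⁻¹,
    (1 - (α + 1) / r)⁻¹, ?_⟩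
  rw [one_div ((1 / α - d / (2 * r))⁻¹), one_div ((1 - (α + 1) * (1 / α - d / (2 * r)))⁻¹),
    one_div ((1 - (α + 1) / r)⁻¹), inv_inv, inv_inv, inv_inv,
    div_inv_eq_mul, div_inv_eq_mul, div_inv_eq_mul, div_inv_eq_mul, div_inv_eq_mul]
  have hQn : (1 / α - d / (2 * r)) ≠ 0 := ne_of_gt hQ
  refine ⟨⟨hQ, ?_⟩, ⟨by positivity, ?_⟩, ⟨hQt, ?_⟩, ⟨hRt, ?_⟩, ?_, ?_, ?_, ?_, ?_, ?_, ?_, ?_⟩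
  · -- Q < 1/2
    rw [hfrac, div_lt_div_iff₀ (by positivity) (by norm_num)]
    nlinarith
  · -- 1/r < 1/2
    rw [div_lt_div_iff₀ hr0 (by norm_num)]; linarith
  · -- Qt < 1/2
    rw [show 1 - (α + 1) * (1 / α - d / (2 * r)) = (α * d * (α + 1) - 2 * r) / (2 * α * r) by
      field_simp; ring, div_lt_div_iff₀ (by positivity) (by norm_num)]
    nlinarith
  · -- Rt < 1/2
    rw [show 1 - (α + 1) / r = (r - (α + 1)) / r by field_simp,
      div_lt_div_iff₀ hr0 (by norm_num)]
    nlinarith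
  · -- Q + d/r < d/2
    rw [show 1 / α - d / (2 * r) + d / r = (2 * r + α * d) / (2 * α * r) by field_simp; ring,
      div_lt_div_iff₀ (by positivity) (by norm_num)]
    nlinarith
  · -- Qt + d*Rt < d/2
    rw [show 1 - (α + 1) * (1 / α - d / (2 * r)) + d * (1 - (α + 1) / r)
        = ((2 * α * r + 2 * α * d * r) - ((α + 1) * (2 * r - α * d) + 2 * α * d * (α + 1))) / (2 * α * r) by
      field_simp; ring, div_lt_div_iff₀ (by positivity) (by norm_num)]
    nlinarith
  · -- 2*Q + d/r = d/2 - s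
    field_simp; ring
  · -- sum = d
    field_simp; ring
  · ring
  · ring
  · -- α*Q + αd/(2r) = 1
    field_simp
    ring
  · rw [div_lt_one hr0]; linarith

lemma nonempty_stmt6 (d : ℝ) (hd1 : 1 ≤ d) (α : ℝ) (hα : 2 ≤ α)
    (hαd : 4 ≤ α * d) (hαd4 : α * d < α + 4) :
    max (α + 1) (α * (α + 1) * d / (α + 2)) < α * (α + 1) * d / (α * d - 2) := by
  have hα0 : (0:ℝ) < α := by linarith
  have hαd2 : (0:ℝ) < α * d - 2 := by linarith
  have hα2 : (0:ℝ) < α + 2 := by linarith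
  apply max_lt
  · rw [lt_div_iff₀ hαd2]; nlinarith
  · rw [div_lt_div_iff₀ hα2 hαd2]
    have hd0 : (0:ℝ) < d := by linarith
    have hpos : (0:ℝ) < α * (α + 1) * d := by positivity
    nlinarith [mul_lt_mul_of_pos_left (show α * d - 2 < α + 2 by linarith) hpos]

theorem stmt_6' (d : ℝ) (hd1 : 1 ≤ d) (hd2 : d ≤ 2) (α : ℝ) (hα : 2 ≤ α)
    (hαd : 4 ≤ α * d) (hαd4 : α * d < α + 4) :
    (∃ q r qt rt : ℝ,
      (0 < 1 / q ∧ 1 / q < 1 / 2) ∧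
      (0 < 1 / r ∧ 1 / r < 1 / 2) ∧
      (0 < 1 / qt ∧ 1 / qt < 1 / 2) ∧
      (0 < 1 / rt ∧ 1 / rt < 1 / 2) ∧
      1 / q + d / r < d / 2 ∧
      1 / qt + d / rt < d / 2 ∧
      2 / q + d / r = d / 2 - (α * d - 4) / (2 * α) ∧
      2 / q + d / r + 2 / qt + d / rt = d ∧
      1 - 1 / qt = (α + 1) / q ∧
      1 - 1 / rt = (α + 1) / r ∧
      α / q + α * d / (2 * r) = 1 ∧
      α / r < 1) ∧
    (∀ r : ℝ, max (α + 1) (α * (α + 1) * d / (α + 2)) < r →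
      r < α * (α + 1) * d / (α * d - 2) →
      ∃ q qt rt : ℝ,
        (0 < 1 / q ∧ 1 / q < 1 / 2) ∧
        (0 < 1 / r ∧ 1 / r < 1 / 2) ∧
        (0 < 1 / qt ∧ 1 / qt < 1 / 2) ∧
        (0 < 1 / rt ∧ 1 / rt < 1 / 2) ∧
        1 / q + d / r < d / 2 ∧
        1 / qt + d / rt < d / 2 ∧
        2 / q + d / r = d / 2 - (α * d - 4) / (2 * α) ∧
        2 / q + d / r + 2 / qt + d / rt = d ∧
        1 - 1 / qt = (α + 1) / q ∧
        1 - 1 / rt = (α + 1) / r ∧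
        α / q + α * d / (2 * r) = 1 ∧
        α / r < 1) := by
  have key : ∀ r : ℝ, max (α + 1) (α * (α + 1) * d / (α + 2)) < r →
      r < α * (α + 1) * d / (α * d - 2) →
      ∃ q qt rt : ℝ,
        (0 < 1 / q ∧ 1 / q < 1 / 2) ∧
        (0 < 1 / r ∧ 1 / r < 1 / 2) ∧
        (0 < 1 / qt ∧ 1 / qt < 1 / 2) ∧
        (0 < 1 / rt ∧ 1 / rt < 1 / 2) ∧
        1 / q + d / r < d / 2 ∧
        1 / qt + d / rt < d / 2 ∧
        2 / q + d / r = d / 2 - (α * d - 4) / (2 * α) ∧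
        2 / q + d / r + 2 / qt + d / rt = d ∧
        1 - 1 / qt = (α + 1) / q ∧
        1 - 1 / rt = (α + 1) / r ∧
        α / q + α * d / (2 * r) = 1 ∧
        α / r < 1 := by
    intro r hmax hup
    exact aux_stmt6 d hd1 hd2 α hα hαd hαd4 r
      (lt_of_le_of_lt (le_max_left _ _) hmax)
      (lt_of_le_of_lt (le_max_right _ _) hmax) hup
  refine ⟨?_, key⟩
  set m := (max (α + 1) (α * (α + 1) * d / (α + 2)) + α * (α + 1) * d / (α * d - 2)) / 2 with hm
  have hne := nonempty_stmt6 d hd1 α hα hαd hαd4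
  obtain ⟨q, qt, rt, h⟩ := key m (by rw [hm]; linarith) (by rw [hm]; linarith)
  exact ⟨q, m, qt, rt, h⟩


/-- Existence of admissible exponents in low dimension `d ∈ {1,2}`:
for `4/d ≤ α` (and `α < 4` when `d = 2`), setting `s = (αd−4)/(2α)`,
there exist `(q, r, q̃, r̃)` with reciprocals in `(0, 1/2)` satisfying the
listed conditions.  Moreover, for every `r` with
`max{α+1, α(α+1)d/(α+2)} < r < α(α+1)d/(αd−2)` one can find such
`q, q̃, r̃` with the same `r`. -/
theorem stmt_6 (d : ℕ) (hd : d = 1 ∨ d = 2) (α : ℝ)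
    (hα₁ : 4 / (d : ℝ) ≤ α) (hα₂ : d = 2 → α < 4) :
    (∃ q r qt rt : ℝ,
      (0 < 1 / q ∧ 1 / q < 1 / 2) ∧
      (0 < 1 / r ∧ 1 / r < 1 / 2) ∧
      (0 < 1 / qt ∧ 1 / qt < 1 / 2) ∧
      (0 < 1 / rt ∧ 1 / rt < 1 / 2) ∧
      1 / q + (d : ℝ) / r < (d : ℝ) / 2 ∧
      1 / qt + (d : ℝ) / rt < (d : ℝ) / 2 ∧
      2 / q + (d : ℝ) / r = (d : ℝ) / 2 - (α * d - 4) / (2 * α) ∧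
      2 / q + (d : ℝ) / r + 2 / qt + (d : ℝ) / rt = (d : ℝ) ∧
      1 - 1 / qt = (α + 1) / q ∧
      1 - 1 / rt = (α + 1) / r ∧
      α / q + α * d / (2 * r) = 1 ∧
      α / r < 1) ∧
    (∀ r : ℝ, max (α + 1) (α * (α + 1) * d / (α + 2)) < r →
      r < α * (α + 1) * d / (α * d - 2) →
      ∃ q qt rt : ℝ,
        (0 < 1 / q ∧ 1 / q < 1 / 2) ∧
        (0 < 1 / r ∧ 1 / r < 1 / 2) ∧
        (0 < 1 / qt ∧ 1 / qt < 1 / 2) ∧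
        (0 < 1 / rt ∧ 1 / rt < 1 / 2) ∧
        1 / q + (d : ℝ) / r < (d : ℝ) / 2 ∧
        1 / qt + (d : ℝ) / rt < (d : ℝ) / 2 ∧
        2 / q + (d : ℝ) / r = (d : ℝ) / 2 - (α * d - 4) / (2 * α) ∧
        2 / q + (d : ℝ) / r + 2 / qt + (d : ℝ) / rt = (d : ℝ) ∧
        1 - 1 / qt = (α + 1) / q ∧
        1 - 1 / rt = (α + 1) / r ∧
        α / q + α * d / (2 * r) = 1 ∧
        α / r < 1) := by
  rcases hd with h | h <;> subst h
  · norm_num at hα₁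
    simp only [Nat.cast_one]
    exact stmt_6' 1 le_rfl (by norm_num) α (by linarith) (by linarith) (by linarith)
  · norm_num at hα₁
    have h4 := hα₂ rfl
    simp only [Nat.cast_ofNat]
    exact stmt_6' 2 (by norm_num) le_rfl α hα₁ (by linarith) (by linarith)
end
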